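/- The linking matrix of a nanophrase is invariant under an H2 move: if p' is obtained from p by deleting subwords AB and BA where τ(|A|) = |B|, then L(p) = L(p'). -/

import Mathlib

/-! Nanophrases over `α` (flat representation: `some A` is an occurrence of
the letter `A`, `none` is the separator between components), the abelian
group `π` generated by `α` with relations `a + τ a = 0`, and the linking
matrix. -/

/-- A nanophrase over `α`. -/
structure Nanophrase (α : Type*) where
  proj : ℕ → α
  seq : List (Option ℕ)

namespace Nanophrase

/-- The list of occurrences `(component index, letter)`, components being
numbered starting from `1`. -/
def occAux : ℕ → List (Option ℕ) → List (ℕ × ℕ)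
  | _, [] => []
  | k, none :: t => occAux (k + 1) t
  | k, some a :: t => (k, a) :: occAux k t

/-- The occurrences of a nanophrase, as pairs `(component, letter)`. -/
def occ {α : Type*} (p : Nanophrase α) : List (ℕ × ℕ) := occAux 1 p.seq

/-- The (finite) set of letters appearing in a nanophrase. -/
def letters {α : Type*} (p : Nanophrase α) : Finset ℕ :=
  (p.occ.map Prod.snd).toFinset

/-- A nanophrase is Gauss when every letter appearing in it appears
exactly twice. -/
def IsGauss {α : Type*} (p : Nanophrase α) : Prop :=
  ∀ a : ℕ, some a ∈ p.seq → p.seq.count (some a) = 2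

end Nanophrase

variable (α : Type*) (τ : α → α)

/-- The abelian group `π` generated by the elements of `α` subject to the
relations `a + τ a = 0`. -/
abbrev piGroup := FreeAbelianGroup α ⧸
  AddSubgroup.closure {x : FreeAbelianGroup α |
    ∃ a, x = FreeAbelianGroup.of a + FreeAbelianGroup.of (τ a)}

/-- The canonical map `α → π`. -/
def toPi (a : α) : piGroup α τ := QuotientAddGroup.mk (FreeAbelianGroup.of a)

namespace Nanophrase

variable {α}

/-- `A_{ij}(p)`: the set of letters having one occurrence in the `i`-th
component and the other in the `j`-th component of `p`. -/
def Aij (p : Nanophrase α) (i j : ℕ) : Finset ℕ :=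
  p.letters.filter (fun a => (i, a) ∈ p.occ ∧ (j, a) ∈ p.occ)

/-- The entries `l_{ij}(p)` of the linking matrix: `l_{ii}(p) = 0` and for
`i ≠ j`, `l_{ij}(p) = ∑_{A ∈ A_{ij}(p)} |A|` in `π`. -/
noncomputable def lij (p : Nanophrase α) (i j : ℕ) : piGroup α τ :=
  if i = j then 0 else ∑ a ∈ p.Aij i j, toPi α τ (p.proj a)

end Nanophrase

/- ### Auxiliary lemmas -/

namespace Nanophrase

lemma occAux_append (u v : List (Option ℕ)) (k : ℕ) :
    occAux k (u ++ v) = occAux k u ++ occAux (k + u.count none) v := by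
  induction u generalizing k with
  | nil => simp [occAux]
  | cons hd t ih =>
    cases hd with
    | none =>
      have hc : (none :: t).count none = t.count none + 1 := by simp
      show occAux (k + 1) (t ++ v) = occAux (k + 1) t ++ occAux (k + (none :: t).count none) v
      rw [ih, hc, show k + (t.count none + 1) = (k + 1) + t.count none by omega]
    | some a =>
      have hc : (some a :: t).count none = t.count none := by simp
      show (k, a) :: occAux k (t ++ v) = ((k, a) :: occAux k t) ++ occAux (k + (some a :: t).count none) v
      rw [ih, hc, List.cons_append]

lemma mem_seq_of_mem_occAux {l : List (Option ℕ)} {k i a : ℕ}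
    (h : (i, a) ∈ occAux k l) : some a ∈ l := by
  induction l generalizing k with
  | nil => simp [occAux] at h
  | cons hd t ih =>
    cases hd with
    | none => exact List.mem_cons_of_mem _ (ih h)
    | some b =>
      rw [occAux, List.mem_cons] at h
      rcases h with h | h
      · simp_all
      · exact List.mem_cons_of_mem _ (ih h)

lemma mem_letters {α : Type*} {p : Nanophrase α} {a : ℕ} :
    a ∈ p.letters ↔ ∃ i, (i, a) ∈ p.occ := by
  simp only [letters, List.mem_toFinset, List.mem_map]
  constructor
  · rintro ⟨⟨i, b⟩, h, rfl⟩; exact ⟨i, h⟩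
  · rintro ⟨i, h⟩; exact ⟨(i, a), h, rfl⟩

lemma mem_Aij {α : Type*} {p : Nanophrase α} {i j a : ℕ} :
    a ∈ p.Aij i j ↔ (i, a) ∈ p.occ ∧ (j, a) ∈ p.occ := by
  simp only [Aij, Finset.mem_filter, and_iff_right_iff_imp]
  exact fun h => mem_letters.2 ⟨i, h.1⟩

end Nanophrase

lemma toPi_rel (a : α) : toPi α τ a + toPi α τ (τ a) = 0 := by
  show (QuotientAddGroup.mk _ : piGroup α τ) + QuotientAddGroup.mk _ = 0
  rw [← QuotientAddGroup.mk_add, QuotientAddGroup.eq_zero_iff]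
  exact AddSubgroup.subset_closure ⟨a, rfl⟩

set_option maxHeartbeats 1000000 in
/-- the linking matrix is invariant under an H2 move: if
`p'` is obtained from the Gauss nanophrase `p` by deleting subwords `AB`
and `BA` with `τ(|A|) = |B|`, then `L(p) = L(p')`. -/
theorem Nanophrase.lij_h2_invariant (hτ : Function.Involutive τ)
    (p p' : Nanophrase α) (hp : p.IsGauss) (hp' : p'.IsGauss)
    (hmove : ∃ (x y z : List (Option ℕ)) (A B : ℕ),
      τ (p.proj A) = p.proj B ∧
      p.seq = x ++ [some A, some B] ++ y ++ [some B, some A] ++ z ∧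
      p'.seq = x ++ y ++ z ∧ p'.proj = p.proj) :
    ∀ i j : ℕ, p.lij τ i j = p'.lij τ i j := by
  obtain ⟨x, y, z, A, B, hAB, hseq, hseq', hproj⟩ := hmove
  set i0 : ℕ := 1 + x.count none with hi0
  set j0 : ℕ := 1 + x.count none + y.count none with hj0
  -- A ≠ B and A, B do not occur in x, y, z
  have h2A := hp A (by rw [hseq]; simp)
  have h2B := hp B (by rw [hseq]; simp)
  rw [hseq] at h2A h2B
  have hABne : A ≠ B := by
    intro h; subst h
    simp only [List.count_append] at h2A
    have c1 : List.count (some A) [some A, some A] = 2 := by simp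
    omega
  have hAx : (some A) ∉ x ∧ (some A) ∉ y ∧ (some A) ∉ z := by
    simp only [List.count_append] at h2A
    have cA : x.count (some A) = 0 ∧ y.count (some A) = 0 ∧ z.count (some A) = 0 := by
      have : List.count (some A) [some A, some B] = 1 := by
        simp [List.count_cons, hABne, Ne.symm hABne]
      have h2 : List.count (some A) [some B, some A] = 1 := by
        simp [List.count_cons, hABne, Ne.symm hABne]
      omega
    exact ⟨by rw [← List.count_eq_zero] ; exact cA.1,
      by rw [← List.count_eq_zero]; exact cA.2.1, by rw [← List.count_eq_zero]; exact cA.2.2⟩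
  have hBx : (some B) ∉ x ∧ (some B) ∉ y ∧ (some B) ∉ z := by
    simp only [List.count_append] at h2B
    have cB : x.count (some B) = 0 ∧ y.count (some B) = 0 ∧ z.count (some B) = 0 := by
      have : List.count (some B) [some A, some B] = 1 := by
        simp [List.count_cons, hABne, Ne.symm hABne]
      have h2 : List.count (some B) [some B, some A] = 1 := by
        simp [List.count_cons, hABne, Ne.symm hABne]
      omega
    exact ⟨by rw [← List.count_eq_zero]; exact cB.1,
      by rw [← List.count_eq_zero]; exact cB.2.1, by rw [← List.count_eq_zero]; exact cB.2.2⟩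
  -- occurrence membership characterization
  have hseq2 : p.seq = x ++ (some A :: some B :: (y ++ (some B :: some A :: z))) := by
    rw [hseq]; simp
  have hoccp : p.occ = occAux 1 x ++ ((i0, A) :: (i0, B) ::
      (occAux i0 y ++ ((j0, B) :: (j0, A) :: occAux j0 z))) := by
    rw [occ, hseq2, occAux_append, occAux, occAux, occAux_append, occAux, occAux]
  have hoccp' : p'.occ = occAux 1 x ++ (occAux i0 y ++ occAux j0 z) := by
    rw [occ, hseq', occAux_append, occAux_append, List.count_append, List.append_assoc,
      show 1 + (x.count none + y.count none) = j0 by omega]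
  have hmem : ∀ i a : ℕ, (i, a) ∈ p.occ ↔
      (i, a) ∈ p'.occ ∨ ((a = A ∨ a = B) ∧ (i = i0 ∨ i = j0)) := by
    intro i a
    rw [hoccp, hoccp']
    simp only [List.mem_append, List.mem_cons, Prod.mk.injEq]
    tauto
  -- A, B not in occ p'
  have hAnot : ∀ i : ℕ, (i, A) ∉ p'.occ := by
    intro i h
    have := mem_seq_of_mem_occAux (l := p'.seq) (k := 1) h
    rw [hseq'] at this
    simp only [List.mem_append] at this
    tauto
  have hBnot : ∀ i : ℕ, (i, B) ∉ p'.occ := by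
    intro i h
    have := mem_seq_of_mem_occAux (l := p'.seq) (k := 1) h
    rw [hseq'] at this
    simp only [List.mem_append] at this
    tauto
  intro i j
  rcases eq_or_ne i j with rfl | hij
  · simp [lij]
  rw [lij, lij, if_neg hij, if_neg hij, hproj]
  by_cases hc : (i = i0 ∧ j = j0) ∨ (i = j0 ∧ j = i0)
  · -- the Aij set gains exactly A and B
    have hset : p.Aij i j = insert A (insert B (p'.Aij i j)) := by
      ext a
      simp only [Finset.mem_insert, mem_Aij, hmem]
      constructor
      · rintro ⟨hi, hj⟩
        rcases hi with hi | ⟨ha, _⟩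
        · rcases hj with hj | ⟨ha, _⟩
          · exact Or.inr (Or.inr ⟨hi, hj⟩)
          · rcases ha with rfl | rfl
            · exact absurd hi (hAnot i)
            · exact absurd hi (hBnot i)
        · tauto
      · rintro (rfl | rfl | ⟨hi, hj⟩)
        · exact ⟨Or.inr ⟨Or.inl rfl, by omega⟩, Or.inr ⟨Or.inl rfl, by omega⟩⟩
        · exact ⟨Or.inr ⟨Or.inr rfl, by omega⟩, Or.inr ⟨Or.inr rfl, by omega⟩⟩
        · exact ⟨Or.inl hi, Or.inl hj⟩
    have hAnotin : A ∉ insert B (p'.Aij i j) := by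
      simp only [Finset.mem_insert, mem_Aij]
      rintro (h | ⟨h, -⟩)
      · exact hABne h
      · exact hAnot i h
    have hBnotin : B ∉ p'.Aij i j := fun h => hBnot i (mem_Aij.1 h).1
    rw [hset, Finset.sum_insert hAnotin, Finset.sum_insert hBnotin, ← add_assoc,
      ← hAB, toPi_rel, zero_add]
  · -- the Aij sets coincide
    have hset : p.Aij i j = p'.Aij i j := by
      ext a
      simp only [mem_Aij, hmem]
      constructor
      · rintro ⟨hi, hj⟩
        rcases hi with hi | ⟨ha, hi⟩
        · rcases hj with hj | ⟨ha, hj⟩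
          · exact ⟨hi, hj⟩
          · rcases ha with rfl | rfl
            · exact absurd hi (hAnot i)
            · exact absurd hi (hBnot i)
        · rcases hj with hj | ⟨ha', hj⟩
          · rcases ha with rfl | rfl
            · exact absurd hj (hAnot j)
            · exact absurd hj (hBnot j)
          · exact absurd rfl (by omega : ¬ (a = a))
      · rintro ⟨hi, hj⟩
        exact ⟨Or.inl hi, Or.inl hj⟩
    rw [hset]
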